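/- For m ≥ 2, the stabilizer in O(2) of the polynomial p_m(x,y) + (x² + y²)·q_m(x,y) is exactly the cyclic rotation group K_m. -/

import Mathlib

open MvPolynomial Real Matrix Complex

/-- The rotation of `ℝ²` by angle `θ`. -/
noncomputable def rotMat (θ : ℝ) : Matrix (Fin 2) (Fin 2) ℝ :=
  !![Real.cos θ, -Real.sin θ; Real.sin θ, Real.cos θ]

/-- The stabilizer in `O(2)` of a polynomial `P`. -/
def polyStab (P : MvPolynomial (Fin 2) ℝ) : Set (Matrix (Fin 2) (Fin 2) ℝ) :=
  {A | A * Aᵀ = 1 ∧ ∀ v : Fin 2 → ℝ, eval (A.mulVec v) P = eval v P}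

/-- The cyclic group `K_m` of rotations of order `m`. -/
noncomputable def CycSet (m : ℕ) : Set (Matrix (Fin 2) (Fin 2) ℝ) :=
  {A | ∃ k : ℕ, k < m ∧ A = rotMat (2 * π * k / m)}

/-!
Identify `ℝ²` with `ℂ`, so that the polynomial becomes `F z = Re (z ^ m) + |z|² Im (z ^ m)`.
An orthogonal map is `z ↦ u z` or `z ↦ u z̄` with `|u| = 1`. Restricting invariance to the real
axis gives `Re (u ^ m) + r² Im (u ^ m) = 1` for all `r`, hence `u ^ m = 1`; conversely `F` is
invariant under multiplication by an `m`-th root of unity. A reflection is then excluded because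
`F (z̄) = -F z ≠ F z` at a root `z` of `z ^ m = i`.
-/

open ComplexConjugate

def toComplex (v : Fin 2 → ℝ) : ℂ := v 0 + v 1 * I

lemma toComplex_surjective : Function.Surjective toComplex :=
  fun z => ⟨![z.re, z.im], by simp [toComplex, re_add_im]⟩

def rotMatOf (u : ℂ) : Matrix (Fin 2) (Fin 2) ℝ := !![u.re, -u.im; u.im, u.re]

def reflMatOf (u : ℂ) : Matrix (Fin 2) (Fin 2) ℝ := !![u.re, u.im; u.im, -u.re]

lemma rotMat_eq_rotMatOf (θ : ℝ) : rotMat θ = rotMatOf (exp (θ * I)) := by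
  simp [rotMat, rotMatOf, exp_ofReal_mul_I_re, exp_ofReal_mul_I_im]

lemma toComplex_rotMatOf_mulVec (u : ℂ) (v : Fin 2 → ℝ) :
    toComplex (rotMatOf u *ᵥ v) = u * toComplex v := by
  apply Complex.ext <;> simp [toComplex, rotMatOf, mulVec, dotProduct] <;> ring

lemma toComplex_reflMatOf_mulVec (u : ℂ) (v : Fin 2 → ℝ) :
    toComplex (reflMatOf u *ᵥ v) = u * conj (toComplex v) := by
  apply Complex.ext
  · simp [toComplex, reflMatOf, mulVec, dotProduct]
  · simp [toComplex, reflMatOf, mulVec, dotProduct]; ring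

lemma rotMatOf_mul_transpose {u : ℂ} (hu : normSq u = 1) : rotMatOf u * (rotMatOf u)ᵀ = 1 := by
  rw [normSq_apply] at hu
  ext i j
  fin_cases i <;> fin_cases j <;> simp [rotMatOf, mul_apply, Fin.sum_univ_two] <;> linarith

lemma orthonormal_fin_two_cases {a b c d : ℝ} (h₀ : a * a + c * c = 1)
    (h₁ : b * b + d * d = 1) (h : a * b + c * d = 0) :
    (b = -c ∧ d = a) ∨ (b = c ∧ d = -a) := by
  have hdet : (a * d - b * c - 1) * (a * d - b * c + 1) = 0 := by
    linear_combination (b * b + d * d) * h₀ + h₁ - (a * b + c * d) * h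
  have sq_zero {x y : ℝ} (hxy : x ^ 2 + y ^ 2 = 0) : x = 0 ∧ y = 0 := by
    obtain ⟨hx, hy⟩ := (add_eq_zero_iff_of_nonneg (sq_nonneg x) (sq_nonneg y)).mp hxy
    exact ⟨pow_eq_zero_iff two_ne_zero |>.mp hx, pow_eq_zero_iff two_ne_zero |>.mp hy⟩
  rcases mul_eq_zero.mp hdet with hdet | hdet
  · obtain ⟨hb, hd⟩ := sq_zero (x := b + c) (y := d - a)
      (by linear_combination h₀ + h₁ - 2 * hdet)
    exact .inl ⟨by linarith, by linarith⟩
  · obtain ⟨hb, hd⟩ := sq_zero (x := b - c) (y := d + a)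
      (by linear_combination h₀ + h₁ + 2 * hdet)
    exact .inr ⟨by linarith, by linarith⟩

lemma eq_rotMatOf_or_reflMatOf {A : Matrix (Fin 2) (Fin 2) ℝ} (hA : A * Aᵀ = 1) :
    ∃ u : ℂ, normSq u = 1 ∧ (A = rotMatOf u ∨ A = reflMatOf u) := by
  have hAtA : Aᵀ * A = 1 := mul_eq_one_comm.mp hA
  have entry (i j : Fin 2) := congrFun (congrFun hAtA i) j
  simp only [mul_apply, Fin.sum_univ_two, transpose_apply, one_apply] at entry
  have col₀ : A 0 0 * A 0 0 + A 1 0 * A 1 0 = 1 := by simpa using entry 0 0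
  refine ⟨⟨A 0 0, A 1 0⟩, by simpa [normSq_apply] using col₀, ?_⟩
  rcases orthonormal_fin_two_cases col₀ (by simpa using entry 1 1) (by simpa using entry 0 1)
    with ⟨hb, hd⟩ | ⟨hb, hd⟩
  · left
    ext i j
    fin_cases i <;> fin_cases j <;> simp [rotMatOf, hb, hd]
  · right
    ext i j
    fin_cases i <;> fin_cases j <;> simp [reflMatOf, hb, hd]

def stabForm (m : ℕ) (z : ℂ) : ℝ := (z ^ m).re + normSq z * (z ^ m).im

lemma eval_eq_stabForm {m : ℕ} {p q : MvPolynomial (Fin 2) ℝ}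
    (hp : ∀ v : Fin 2 → ℝ, eval v p = (((v 0 : ℂ) + (v 1 : ℂ) * I) ^ m).re)
    (hq : ∀ v : Fin 2 → ℝ, eval v q = (((v 0 : ℂ) + (v 1 : ℂ) * I) ^ m).im)
    (v : Fin 2 → ℝ) : eval v (p + (X 0 ^ 2 + X 1 ^ 2) * q) = stabForm m (toComplex v) := by
  simp only [map_add, map_mul, map_pow, eval_X, hp, hq, stabForm, toComplex, normSq_add_mul_I]

lemma stabForm_mul_of_pow_eq_one {m : ℕ} {u : ℂ} (hu : normSq u = 1) (hum : u ^ m = 1)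
    (z : ℂ) : stabForm m (u * z) = stabForm m z := by
  simp only [stabForm, mul_pow, hum, one_mul, normSq_mul, hu]

lemma pow_eq_one_of_stabForm_mul_ofReal {m : ℕ} {u : ℂ} (hu : normSq u = 1)
    (h : ∀ r : ℝ, stabForm m (u * r) = stabForm m r) : u ^ m = 1 := by
  have on_real_axis (r : ℝ) (hr : r ≠ 0) : (u ^ m).re + r ^ 2 * (u ^ m).im = 1 := by
    have hr' : r ^ m ≠ 0 := pow_ne_zero m hr
    have := h r
    simp only [stabForm, mul_pow, ← ofReal_pow, normSq_mul, hu, normSq_ofReal, re_mul_ofReal,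
      im_mul_ofReal, ofReal_re, ofReal_im, mul_zero, add_zero, one_mul] at this
    apply mul_right_cancel₀ hr'
    linear_combination this
  have h₁ := on_real_axis 1 one_ne_zero
  have h₂ := on_real_axis 2 two_ne_zero
  apply Complex.ext <;> simp <;> linarith

lemma exists_stabForm_conj_ne {m : ℕ} (hm : m ≠ 0) :
    ∃ z : ℂ, stabForm m (conj z) ≠ stabForm m z := by
  obtain ⟨z, hz⟩ := IsAlgClosed.exists_pow_nat_eq I (Nat.pos_of_ne_zero hm)
  have hz₀ : normSq z ≠ 0 := by
    rintro h
    rw [normSq_eq_zero.mp h, zero_pow hm] at hz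
    exact I_ne_zero hz.symm
  have hF_conj : stabForm m (conj z) = -normSq z := by simp [stabForm, ← map_pow, hz]
  have hF : stabForm m z = normSq z := by simp [stabForm, hz]
  refine ⟨z, fun h => hz₀ ?_⟩
  linarith

lemma exp_two_pi_mul_div_eq_pow (m k : ℕ) :
    exp (↑(2 * π * k / m) * I) = exp (2 * π * I / m) ^ k := by
  rw [← Complex.exp_nat_mul]
  congr 1
  push_cast
  ring

lemma exists_lt_exp_eq_of_pow_eq_one {m : ℕ} (hm : m ≠ 0) {u : ℂ} (hu : u ^ m = 1) :
    ∃ k < m, exp (↑(2 * π * k / m) * I) = u := by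
  have : NeZero m := ⟨hm⟩
  obtain ⟨k, hk, rfl⟩ := (isPrimitiveRoot_exp m hm).eq_pow_of_pow_eq_one hu
  exact ⟨k, hk, exp_two_pi_mul_div_eq_pow m k⟩

lemma exp_two_pi_mul_div_pow_eq_one {m : ℕ} (hm : m ≠ 0) (k : ℕ) :
    exp (↑(2 * π * k / m) * I) ^ m = 1 := by
  rw [exp_two_pi_mul_div_eq_pow, ← pow_mul, pow_mul',
    (isPrimitiveRoot_exp m hm).pow_eq_one, one_pow]

lemma normSq_exp_ofReal_mul_I (x : ℝ) : normSq (exp (x * I)) = 1 := by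
  rw [normSq_eq_norm_sq, norm_exp_ofReal_mul_I, one_pow]

/-- For `m ≥ 2`, the stabilizer in `O(2)` of the polynomial
`p_m + (x² + y²)·q_m` is exactly the cyclic rotation group `K_m`. -/
theorem stmt8 (m : ℕ) (hm : 2 ≤ m) (p q : MvPolynomial (Fin 2) ℝ)
    (hp : ∀ v : Fin 2 → ℝ, eval v p = (((v 0 : ℂ) + (v 1 : ℂ) * Complex.I) ^ m).re)
    (hq : ∀ v : Fin 2 → ℝ, eval v q = (((v 0 : ℂ) + (v 1 : ℂ) * Complex.I) ^ m).im) :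
    polyStab (p + (X 0 ^ 2 + X 1 ^ 2) * q) = CycSet m := by
  have hm₀ : m ≠ 0 := by omega
  ext A
  simp only [polyStab, CycSet, Set.mem_ofPred_eq, eval_eq_stabForm hp hq]
  constructor
  · rintro ⟨hA, hinv⟩
    obtain ⟨u, hu, rfl | rfl⟩ := eq_rotMatOf_or_reflMatOf hA
    · simp only [toComplex_rotMatOf_mulVec] at hinv
      have hF := toComplex_surjective.forall
        (p := fun z => stabForm m (u * z) = stabForm m z) |>.mpr hinv
      obtain ⟨k, hk, rfl⟩ := exists_lt_exp_eq_of_pow_eq_one hm₀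
        (pow_eq_one_of_stabForm_mul_ofReal hu fun r => hF r)
      exact ⟨k, hk, (rotMat_eq_rotMatOf _).symm⟩
    · simp only [toComplex_reflMatOf_mulVec] at hinv
      have hF := toComplex_surjective.forall
        (p := fun z => stabForm m (u * conj z) = stabForm m z) |>.mpr hinv
      have hum := pow_eq_one_of_stabForm_mul_ofReal hu fun r => by simpa using hF r
      obtain ⟨z, hz⟩ := exists_stabForm_conj_ne hm₀
      exact absurd ((stabForm_mul_of_pow_eq_one hu hum _).symm.trans (hF z)) hz
  · rintro ⟨k, hk, rfl⟩
    have hu := normSq_exp_ofReal_mul_I (2 * π * k / m)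
    rw [rotMat_eq_rotMatOf]
    refine ⟨rotMatOf_mul_transpose hu, fun v => ?_⟩
    rw [toComplex_rotMatOf_mulVec]
    exact stabForm_mul_of_pow_eq_one hu (exp_two_pi_mul_div_pow_eq_one hm₀ k) _
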